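/- arXiv:2402.16377 — 3 statements merged into one kernel-verified Lean document; each statement's English description precedes it below -/
import Mathlib

section
/- Let X be a Banach space and K : X → X a compact linear operator. If the operator I + K is injective, then I + K is a continuous linear isomorphism of X onto itself (i.e., it is bijective with bounded inverse). -/
open Filter Topology Metric

/-- Bounded below: an injective `I + K` with `K` compact is bounded below. -/
lemma fred_bdd_below
    (X : Type*) [NormedAddCommGroup X] [NormedSpace ℝ X]
    (K : X →L[ℝ] X) (hK : IsCompactOperator K)
    (hinj : Function.Injective (ContinuousLinearMap.id ℝ X + K)) :
    ∃ c : ℝ, 0 < c ∧ ∀ x, c * ‖x‖ ≤ ‖(ContinuousLinearMap.id ℝ X + K) x‖ := by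
  set T := ContinuousLinearMap.id ℝ X + K with hT
  by_contra h
  push_neg at h
  -- a sequence of unit vectors with ‖T uₙ‖ < 1/(n+1)
  have huniv : ∀ n : ℕ, ∃ u : X, ‖u‖ = 1 ∧ ‖T u‖ < 1 / (n + 1 : ℝ) := by
    intro n
    obtain ⟨x, hx⟩ := h (1 / (n + 1 : ℝ)) (by positivity)
    have hx0 : x ≠ 0 := by
      rintro rfl
      simp at hx
    refine ⟨‖x‖⁻¹ • x, ?_, ?_⟩
    · rw [norm_smul, norm_inv, norm_norm, inv_mul_cancel₀ (norm_ne_zero_iff.2 hx0)]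
    · rw [map_smul, norm_smul, norm_inv, norm_norm]
      rw [inv_mul_lt_iff₀ (norm_pos_iff.2 hx0), mul_comm]
      exact hx
  choose u hu1 hu2 using huniv
  obtain ⟨C, hCc, hC⟩ := hK.image_closedBall_subset_compact 1
  have hmem : ∀ n, K (u n) ∈ C := fun n =>
    hC ⟨u n, by simp [Metric.mem_closedBall, dist_zero_right, (hu1 n).le], rfl⟩
  obtain ⟨y, -, φ, hφ, hy⟩ := hCc.tendsto_subseq hmem
  -- T uₙ → 0
  have hTu : Tendsto (fun n => T (u (φ n))) atTop (𝓝 0) := by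
    apply squeeze_zero_norm (fun n => (hu2 (φ n)).le)
    have : Tendsto (fun n : ℕ => 1 / (n + 1 : ℝ)) atTop (𝓝 0) :=
      tendsto_one_div_add_atTop_nhds_zero_nat
    apply squeeze_zero (fun n => by positivity) (fun n => ?_) this
    gcongr
    exact_mod_cast hφ.le_apply
  -- uₙ = T uₙ - K uₙ → -y
  have huy : Tendsto (fun n => u (φ n)) atTop (𝓝 (-y)) := by
    have : (fun n => u (φ n)) = fun n => T (u (φ n)) - K (u (φ n)) := by
      funext n; simp [hT]
    rw [this]
    simpa using hTu.sub hy
  have hny : ‖y‖ = 1 := by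
    have h1 : Tendsto (fun _ : ℕ => (1 : ℝ)) atTop (𝓝 ‖-y‖) := by
      simpa [hu1] using huy.norm
    have h2 := tendsto_nhds_unique h1 tendsto_const_nhds
    rw [norm_neg] at h2; exact h2
  have hTy : T (-y) = 0 := by
    have h2 : Tendsto (fun n => T (u (φ n))) atTop (𝓝 (T (-y))) :=
      (T.continuous.tendsto (-y)).comp huy
    exact tendsto_nhds_unique h2 hTu
  have : -y = 0 := hinj (by simpa using hTy)
  rw [neg_eq_zero] at this
  rw [this, norm_zero] at hny
  exact zero_ne_one hny

/-- A bounded-below continuous linear map has closed range. -/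
lemma fred_closed_range
    (X : Type*) [NormedAddCommGroup X] [NormedSpace ℝ X] [CompleteSpace X]
    (f : X →L[ℝ] X) {c : ℝ} (hc : 0 < c) (h : ∀ x, c * ‖x‖ ≤ ‖f x‖) :
    IsClosed (Set.range f) := by
  have ha : AntilipschitzWith ⟨c⁻¹, (inv_pos.2 hc).le⟩ f := by
    apply f.antilipschitz_of_bound
    intro x
    change ‖x‖ ≤ c⁻¹ * ‖f x‖
    rw [← div_eq_inv_mul, le_div_iff₀ hc, mul_comm]
    exact h x
  exact ha.isClosed_range f.uniformContinuous

/-- Riesz lemma inside a subspace. -/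
lemma fred_riesz
    (X : Type*) [NormedAddCommGroup X] [NormedSpace ℝ X]
    {F G : Submodule ℝ X} (hFG : F ≤ G) (hFc : IsClosed (F : Set X))
    {z : X} (hzG : z ∈ G) (hzF : z ∉ F) :
    ∃ x ∈ G, ‖x‖ = 1 ∧ ∀ y ∈ F, (1 : ℝ) / 2 ≤ ‖x - y‖ := by
  have hne : (F : Set X).Nonempty := ⟨0, F.zero_mem⟩
  have hd : 0 < infDist z (F : Set X) :=
    (hFc.notMem_iff_infDist_pos hne).1 hzF
  obtain ⟨y₀, hy₀F, hy₀⟩ := (infDist_lt_iff hne).1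
    (by linarith : infDist z (F : Set X) < 2 * infDist z (F : Set X))
  set d := infDist z (F : Set X)
  set v := z - y₀ with hv
  have hnv : 0 < ‖v‖ := by
    rw [norm_pos_iff, hv, sub_ne_zero]
    rintro rfl; exact hzF hy₀F
  refine ⟨‖v‖⁻¹ • v, ?_, ?_, ?_⟩
  · exact G.smul_mem _ (G.sub_mem hzG (hFG hy₀F))
  · rw [norm_smul, norm_inv, norm_norm, inv_mul_cancel₀ hnv.ne']
  · intro y hy
    have hw : y₀ + ‖v‖ • y ∈ F := F.add_mem hy₀F (F.smul_mem _ hy)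
    have key : ‖v‖⁻¹ • v - y = ‖v‖⁻¹ • (z - (y₀ + ‖v‖ • y)) := by
      have h1 : ‖v‖⁻¹ • (z - (y₀ + ‖v‖ • y)) = ‖v‖⁻¹ • v - (‖v‖⁻¹ * ‖v‖) • y := by
        rw [hv]; module
      rw [h1, inv_mul_cancel₀ hnv.ne', one_smul]
    rw [key, norm_smul, norm_inv, norm_norm]
    have hge : d ≤ ‖z - (y₀ + ‖v‖ • y)‖ := by
      rw [← dist_eq_norm]
      exact infDist_le_dist_of_mem hw
    have hlt : ‖v‖ < 2 * d := by
      rw [hv, ← dist_eq_norm]; exact hy₀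
    calc (1 : ℝ)/2 ≤ ‖v‖⁻¹ * d := by
          rw [le_inv_mul_iff₀ hnv]
          linarith
    _ ≤ ‖v‖⁻¹ * ‖z - (y₀ + ‖v‖ • y)‖ := by gcongr

/-- Fredholm alternative: if `K` is a compact operator on a Banach space `X` and
`I + K` is injective, then `I + K` is a continuous linear isomorphism of `X`. -/
theorem fredholm_alternative_id_add_compact
    (X : Type*) [NormedAddCommGroup X] [NormedSpace ℝ X] [CompleteSpace X]
    (K : X →L[ℝ] X) (hK : IsCompactOperator K)
    (hinj : Function.Injective (ContinuousLinearMap.id ℝ X + K)) :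
    ∃ e : X ≃L[ℝ] X, (e : X →L[ℝ] X) = ContinuousLinearMap.id ℝ X + K := by
  set T := ContinuousLinearMap.id ℝ X + K with hT
  obtain ⟨c, hc, hbb⟩ := fred_bdd_below X K hK hinj
  -- powers are bounded below
  have hbbn : ∀ n : ℕ, ∀ x, c ^ n * ‖x‖ ≤ ‖(T ^ n) x‖ := by
    intro n
    induction n with
    | zero => simp
    | succ n ih =>
      intro x
      have h1 : (T ^ (n + 1)) x = T ((T ^ n) x) := by
        rw [pow_succ']; rfl
      rw [h1, pow_succ, mul_comm (c ^ n) c, mul_assoc]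
      calc c * (c ^ n * ‖x‖) ≤ c * ‖(T ^ n) x‖ := by
            exact mul_le_mul_of_nonneg_left (ih x) hc.le
      _ ≤ _ := hbb _
  have hinjn : ∀ n : ℕ, Function.Injective (T ^ n) := by
    intro n x y hxy
    have := hbbn n (x - y)
    rw [map_sub, hxy, sub_self, norm_zero] at this
    have h2 : ‖x - y‖ ≤ 0 := by nlinarith [pow_pos hc n, norm_nonneg (x - y)]
    rwa [norm_le_zero_iff, sub_eq_zero] at h2
  -- ranges of powers
  set R : ℕ → Submodule ℝ X := fun n => LinearMap.range ((T ^ n : X →L[ℝ] X) : X →ₗ[ℝ] X) with hR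
  have hRc : ∀ n, IsClosed (R n : Set X) := by
    intro n
    have := fred_closed_range X (T ^ n) (pow_pos hc n) (hbbn n)
    simpa only [hR, LinearMap.coe_range, ContinuousLinearMap.coe_coe] using this
  have hsucc : ∀ n, R (n + 1) ≤ R n := by
    intro n y hy
    obtain ⟨x, rfl⟩ := hy
    refine ⟨T x, ?_⟩
    rw [pow_succ]
    rfl
  have hanti : ∀ {m n : ℕ}, m ≤ n → R n ≤ R m := by
    intro m n hmn
    induction hmn with
    | refl => exact le_rfl
    | step h ih => exact le_trans (hsucc _) ih
  -- surjectivity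
  have hsurj : Function.Surjective T := by
    by_contra hns
    rw [Function.Surjective] at hns
    push_neg at hns
    obtain ⟨z, hz⟩ := hns
    -- the chain is strictly decreasing along Tⁿ z
    have hzn : ∀ n : ℕ, (T ^ n) z ∈ R n ∧ (T ^ n) z ∉ R (n + 1) := by
      intro n
      constructor
      · exact ⟨z, rfl⟩
      · rintro ⟨w, hw⟩
        have hw' : (T ^ n) (T w) = (T ^ n) z := by
          rw [← hw, pow_succ]; rfl
        exact hz w (hinjn n hw')
    -- Riesz sequence
    have hx : ∀ n : ℕ, ∃ x ∈ R n, ‖x‖ = 1 ∧ ∀ y ∈ R (n + 1), (1 : ℝ)/2 ≤ ‖x - y‖ := by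
      intro n
      exact fred_riesz X (hsucc n) (hRc (n + 1)) (hzn n).1 (hzn n).2
    choose x hxR hx1 hxd using hx
    -- K xₙ are ≥ 1/2 apart
    have hsep : ∀ m n : ℕ, n < m → (1 : ℝ)/2 ≤ ‖K (x n) - K (x m)‖ := by
      intro m n hnm
      have hTxn : T (x n) ∈ R (n + 1) := by
        obtain ⟨a, ha⟩ := hxR n
        exact ⟨a, by rw [pow_succ', ← ha]; rfl⟩
      have hTxm : T (x m) ∈ R (n + 1) := by
        obtain ⟨a, ha⟩ := hxR m
        refine hanti (by omega : n + 1 ≤ m + 1) ⟨a, by rw [pow_succ', ← ha]; rfl⟩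
      have hxm : x m ∈ R (n + 1) := hanti hnm (hxR m)
      have hmem : T (x n) - T (x m) + x m ∈ R (n + 1) :=
        (R (n + 1)).add_mem ((R (n + 1)).sub_mem hTxn hTxm) hxm
      have hkey : K (x n) - K (x m) = -(x n - (T (x n) - T (x m) + x m)) := by
        have h1 : ∀ w, K w = T w - w := by intro w; simp [hT]
        rw [h1, h1]; abel
      rw [hkey, norm_neg]
      exact hxd n _ hmem
    -- contradiction with compactness
    obtain ⟨C, hCc, hC⟩ := hK.image_closedBall_subset_compact 1
    have hmem : ∀ n, K (x n) ∈ C := fun n =>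
      hC ⟨x n, by simp [Metric.mem_closedBall, dist_zero_right, (hx1 n).le], rfl⟩
    obtain ⟨y, -, φ, hφ, hy⟩ := hCc.tendsto_subseq hmem
    have hcauchy : CauchySeq (fun n => K (x (φ n))) := hy.cauchySeq
    rw [Metric.cauchySeq_iff] at hcauchy
    obtain ⟨N, hN⟩ := hcauchy (1/2) (by norm_num)
    have h1 := hN (N + 1) (by omega) N (by omega)
    rw [dist_eq_norm] at h1
    have h2 := hsep (φ (N + 1)) (φ N) (hφ (by omega))
    rw [norm_sub_rev] at h2
    linarith
  refine ⟨ContinuousLinearEquiv.ofBijective T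
    (LinearMap.ker_eq_bot_of_injective hinj)
    (LinearMap.range_eq_top.2 hsurj), ?_⟩
  exact ContinuousLinearEquiv.coe_ofBijective T _ _
end

section
/- Let Z, X be Banach spaces, and for each h > 0 let T_h ∈ L(Z,X); suppose T ∈ L(Z,X) and ‖T - T_h‖_{L(Z,X)} → 0 as h → 0. Let G : X → Z be C¹ with dG locally Lipschitz, set F = I + T∘G and F_h = I + T_h∘G, and let x ∈ X satisfy F(x) = 0 with dF[x] an isomorphism of X. Then there exist h₀ > 0, a neighborhood O of x, and K > 0 such that for each 0 < h ≤ h₀ there is a unique x_h ∈ O with F_h(x_h) = 0, dF_h[x_h] is an isomorphism of X, and ‖x - x_h‖_X ≤ K ‖(T - T_h)(G(x))‖_X. -/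
open Metric Filter Topology

set_option maxHeartbeats 1000000 in
/-- Brezzi–Rappaz–Raviart: approximation of regular solutions of `x + T(G(x)) = 0`
by solutions of `x + T_h(G(x)) = 0`, with local existence, uniqueness, an isomorphism
property for the discrete linearization, and the error estimate
`‖x - x_h‖ ≤ K ‖(T - T_h)(G(x))‖`. -/
theorem brezzi_rappaz_raviart
    (X Z : Type*) [NormedAddCommGroup X] [NormedSpace ℝ X] [CompleteSpace X]
    [NormedAddCommGroup Z] [NormedSpace ℝ Z] [CompleteSpace Z]
    (T : Z →L[ℝ] X) (Th : ℝ → Z →L[ℝ] X)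
    (hconv : Tendsto (fun h => ‖T - Th h‖) (𝓝[>] (0 : ℝ)) (𝓝 0))
    (G : X → Z) (G' : X → X →L[ℝ] Z)
    (hG : ∀ x, HasFDerivAt G (G' x) x) (hG'cont : Continuous G')
    (hG'lip : ∀ x : X, ∃ ε > (0 : ℝ), ∃ L ≥ (0 : ℝ), ∀ y ∈ ball x ε, ∀ z ∈ ball x ε,
      ‖G' y - G' z‖ ≤ L * ‖y - z‖)
    (x : X) (hx : x + T (G x) = 0)
    (e : X ≃L[ℝ] X)
    (he : (e : X →L[ℝ] X) = ContinuousLinearMap.id ℝ X + T.comp (G' x)) :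
    ∃ h₀ > (0 : ℝ), ∃ O ∈ 𝓝 x, ∃ K > (0 : ℝ), ∀ h : ℝ, 0 < h → h ≤ h₀ →
      ∃ xh ∈ O, xh + Th h (G xh) = 0 ∧
        (∀ y ∈ O, y + Th h (G y) = 0 → y = xh) ∧
        (∃ eh : X ≃L[ℝ] X,
          (eh : X →L[ℝ] X) = ContinuousLinearMap.id ℝ X + (Th h).comp (G' xh)) ∧
        ‖x - xh‖ ≤ K * ‖(T - Th h) (G x)‖ := by
  classical
  set M : ℝ := ‖(e.symm : X →L[ℝ] X)‖ with hMdef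
  have hM0 : 0 ≤ M := norm_nonneg _
  set M1 : ℝ := M + 1 with hM1def
  have hM1 : 0 < M1 := by positivity
  have hMM1 : M ≤ M1 := by simp [hM1def]
  -- δ : tolerance for G' near x
  set δ : ℝ := (4 * M1 * (‖T‖ + 1))⁻¹ with hδdef
  have hδ0 : 0 < δ := by positivity
  have hδ1 : δ ≤ 1 := by
    rw [hδdef]
    have h4 : (1 : ℝ) ≤ 4 * M1 * (‖T‖ + 1) := by nlinarith [norm_nonneg T]
    calc (4 * M1 * (‖T‖ + 1))⁻¹ ≤ 1⁻¹ := by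
          apply inv_anti₀ one_pos h4
      _ = 1 := inv_one
  -- continuity of G' at x gives a radius r
  have hcG : ContinuousAt G' x := hG'cont.continuousAt
  rw [Metric.continuousAt_iff] at hcG
  obtain ⟨r', hr', hball⟩ := hcG δ hδ0
  set r : ℝ := r' / 2 with hrdef
  have hr : 0 < r := by positivity
  have hG'near : ∀ y ∈ closedBall x r, ‖G' y - G' x‖ ≤ δ := by
    intro y hy
    have : dist y x < r' := lt_of_le_of_lt (mem_closedBall.mp hy) (by linarith)
    have := hball this
    rw [dist_eq_norm] at this
    exact this.le
  -- η : tolerance for ‖T - Th h‖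
  set η : ℝ := min 1 (min ((4 * M1 * (‖G' x‖ + 1))⁻¹) (r / (2 * M1 * (‖G x‖ + 1)))) with hηdef
  have hη : 0 < η := by
    apply lt_min one_pos
    apply lt_min <;> positivity
  have hη1 : η ≤ 1 := min_le_left _ _
  have hη2 : η ≤ (4 * M1 * (‖G' x‖ + 1))⁻¹ := le_trans (min_le_right _ _) (min_le_left _ _)
  have hη3 : η ≤ r / (2 * M1 * (‖G x‖ + 1)) := le_trans (min_le_right _ _) (min_le_right _ _)
  -- choose h₀
  have hev : {h : ℝ | ‖T - Th h‖ < η} ∈ 𝓝[>] (0 : ℝ) := hconv (Iio_mem_nhds hη)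
  rw [Metric.mem_nhdsWithin_iff] at hev
  obtain ⟨ε, hε, hεsub⟩ := hev
  refine ⟨ε / 2, by positivity, closedBall x r, closedBall_mem_nhds x hr, 2 * M1, by positivity,
    fun h hh0 hh1 => ?_⟩
  have hTh : ‖T - Th h‖ < η := by
    apply hεsub
    constructor
    · rw [mem_ball, Real.dist_eq, sub_zero, abs_of_pos hh0]; linarith
    · exact hh0
  set nt : ℝ := ‖T - Th h‖ with hntdef
  have hnt0 : 0 ≤ nt := norm_nonneg _
  have hThn : ‖Th h‖ ≤ ‖T‖ + 1 := by
    have : ‖Th h‖ - ‖T‖ ≤ ‖Th h - T‖ := norm_sub_norm_le _ _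
    have h2 : ‖Th h - T‖ = nt := by rw [hntdef, norm_sub_rev]
    linarith [lt_of_lt_of_le hTh hη1]
  -- the fixed point map
  set Φ : X → X := fun y => y - e.symm (y + Th h (G y)) with hΦdef
  set D : X → X →L[ℝ] X := fun y =>
    ContinuousLinearMap.id ℝ X -
      ((e.symm : X →L[ℝ] X).comp (ContinuousLinearMap.id ℝ X + (Th h).comp (G' y))) with hDdef
  have hΦd : ∀ y : X, HasFDerivAt Φ (D y) y := by
    intro y
    have hinner : HasFDerivAt (fun y => y + Th h (G y))
        (ContinuousLinearMap.id ℝ X + (Th h).comp (G' y)) y :=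
      (hasFDerivAt_id y).add ((Th h).hasFDerivAt.comp y (hG y))
    exact (hasFDerivAt_id y).sub ((e.symm : X →L[ℝ] X).hasFDerivAt.comp y hinner)
  -- norm bound on D y for y in the ball
  have key1 : nt * ‖G' x‖ ≤ (4 * M1)⁻¹ := by
    have hc : (0 : ℝ) < ‖G' x‖ + 1 := by positivity
    calc nt * ‖G' x‖ ≤ (4 * M1 * (‖G' x‖ + 1))⁻¹ * (‖G' x‖ + 1) := by
          apply mul_le_mul (le_trans hTh.le hη2) (by linarith) (norm_nonneg _) (by positivity)
      _ = (4 * M1)⁻¹ := by field_simp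
  have key2 : (‖T‖ + 1) * δ = (4 * M1)⁻¹ := by
    rw [hδdef]
    have : (0 : ℝ) < ‖T‖ + 1 := by positivity
    field_simp
  have keyhalf : M * ((4 * M1)⁻¹ + (4 * M1)⁻¹) ≤ 1 / 2 := by
    have : (4 * M1)⁻¹ + (4 * M1)⁻¹ = (2 * M1)⁻¹ := by field_simp; ring
    rw [this]
    rw [div_eq_mul_inv, one_mul]
    calc M * (2 * M1)⁻¹ ≤ M1 * (2 * M1)⁻¹ := by
          apply mul_le_mul_of_nonneg_right hMM1 (by positivity)
      _ = 2⁻¹ := by field_simp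
  have hDbound : ∀ y ∈ closedBall x r, ‖D y‖ ≤ 1 / 2 := by
    intro y hy
    have hrw : D y = (e.symm : X →L[ℝ] X).comp
        ((e : X →L[ℝ] X) - (ContinuousLinearMap.id ℝ X + (Th h).comp (G' y))) := by
      ext v
      simp [hDdef, ContinuousLinearMap.sub_apply, ContinuousLinearMap.comp_apply,
        map_sub, ContinuousLinearEquiv.symm_apply_apply]
    have hrw2 : (e : X →L[ℝ] X) - (ContinuousLinearMap.id ℝ X + (Th h).comp (G' y)) =
        (T - Th h).comp (G' x) + (Th h).comp (G' x - G' y) := by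
      rw [he]
      ext v
      simp [ContinuousLinearMap.sub_apply, ContinuousLinearMap.add_apply,
        ContinuousLinearMap.comp_apply, map_sub]
    rw [hrw, hrw2]
    calc ‖(e.symm : X →L[ℝ] X).comp ((T - Th h).comp (G' x) + (Th h).comp (G' x - G' y))‖
        ≤ M * ‖(T - Th h).comp (G' x) + (Th h).comp (G' x - G' y)‖ :=
          ContinuousLinearMap.opNorm_comp_le _ _
      _ ≤ M * (nt * ‖G' x‖ + (‖T‖ + 1) * δ) := by
          apply mul_le_mul_of_nonneg_left _ hM0
          calc ‖(T - Th h).comp (G' x) + (Th h).comp (G' x - G' y)‖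
              ≤ ‖(T - Th h).comp (G' x)‖ + ‖(Th h).comp (G' x - G' y)‖ := norm_add_le _ _
            _ ≤ nt * ‖G' x‖ + (‖T‖ + 1) * δ := by
                apply add_le_add
                · exact ContinuousLinearMap.opNorm_comp_le _ _
                · calc ‖(Th h).comp (G' x - G' y)‖ ≤ ‖Th h‖ * ‖G' x - G' y‖ :=
                        ContinuousLinearMap.opNorm_comp_le _ _
                    _ ≤ (‖T‖ + 1) * δ := by
                        apply mul_le_mul hThn _ (norm_nonneg _) (by positivity)
                        rw [norm_sub_rev]
                        exact hG'near y hy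
      _ ≤ M * ((4 * M1)⁻¹ + (4 * M1)⁻¹) := by
          apply mul_le_mul_of_nonneg_left _ hM0
          apply add_le_add key1 (le_of_eq key2)
      _ ≤ 1 / 2 := keyhalf
  -- Lipschitz estimate on the closed ball
  have hlip : ∀ y ∈ closedBall x r, ∀ z ∈ closedBall x r, ‖Φ y - Φ z‖ ≤ (1 / 2) * ‖y - z‖ := by
    intro y hy z hz
    exact (convex_closedBall x r).norm_image_sub_le_of_norm_hasFDerivWithin_le
      (fun w hw => (hΦd w).hasFDerivWithinAt) hDbound hz hy
  -- Φ x is close to x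
  have hΦx : Φ x - x = e.symm ((T - Th h) (G x)) := by
    have hTx : T (G x) = -x := eq_neg_of_add_eq_zero_right hx
    have h1 : x + Th h (G x) = -((T - Th h) (G x)) := by
      rw [ContinuousLinearMap.sub_apply, hTx]
      abel
    rw [hΦdef]
    simp only [h1, map_neg]
    abel
  have hΦxnorm : ‖Φ x - x‖ ≤ M * ‖(T - Th h) (G x)‖ := by
    rw [hΦx]
    exact (e.symm : X →L[ℝ] X).le_opNorm _
  have hΦxr : ‖Φ x - x‖ ≤ r / 2 := by
    have h1 : ‖(T - Th h) (G x)‖ ≤ nt * ‖G x‖ := (T - Th h).le_opNorm _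
    have hc : (0 : ℝ) < ‖G x‖ + 1 := by positivity
    have h2 : nt * ‖G x‖ ≤ (r / (2 * M1 * (‖G x‖ + 1))) * (‖G x‖ + 1) := by
      apply mul_le_mul (le_trans hTh.le hη3) (by linarith) (norm_nonneg _) (by positivity)
    have h3 : (r / (2 * M1 * (‖G x‖ + 1))) * (‖G x‖ + 1) = r / (2 * M1) := by
      field_simp
    calc ‖Φ x - x‖ ≤ M * ‖(T - Th h) (G x)‖ := hΦxnorm
      _ ≤ M * (r / (2 * M1)) := by
          apply mul_le_mul_of_nonneg_left _ hM0
          rw [← h3]; exact le_trans h1 h2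
      _ ≤ M1 * (r / (2 * M1)) := by
          apply mul_le_mul_of_nonneg_right hMM1 (by positivity)
      _ = r / 2 := by field_simp
  -- Φ maps the closed ball to itself
  have hmaps : Set.MapsTo Φ (closedBall x r) (closedBall x r) := by
    intro y hy
    rw [mem_closedBall, dist_eq_norm]
    have hxball : x ∈ closedBall x r := mem_closedBall_self hr.le
    calc ‖Φ y - x‖ ≤ ‖Φ y - Φ x‖ + ‖Φ x - x‖ := by
          have : Φ y - x = (Φ y - Φ x) + (Φ x - x) := by abel
          rw [this]; exact norm_add_le _ _
      _ ≤ (1 / 2) * ‖y - x‖ + r / 2 := add_le_add (hlip y hy x hxball) hΦxr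
      _ ≤ (1 / 2) * r + r / 2 := by
          have : ‖y - x‖ ≤ r := by rw [← dist_eq_norm]; exact mem_closedBall.mp hy
          nlinarith
      _ = r := by ring
  -- contraction
  have hcontr : ContractingWith (1 / 2 : NNReal) (hmaps.restrict Φ _ _) := by
    constructor
    · rw [← NNReal.coe_lt_coe]; norm_num
    · apply LipschitzWith.of_dist_le_mul
      rintro ⟨a, ha⟩ ⟨b, hb⟩
      have hc : ((1 / 2 : NNReal) : ℝ) = 1 / 2 := by norm_num
      rw [Subtype.dist_eq, hmaps.val_restrict_apply, hmaps.val_restrict_apply,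
        Subtype.dist_eq, hc, dist_eq_norm, dist_eq_norm]
      exact hlip a ha b hb
  have hxmem : x ∈ closedBall x r := mem_closedBall_self hr.le
  obtain ⟨xh, hxhmem, hfix, -, -⟩ := hcontr.exists_fixedPoint'
    (isClosed_closedBall.isComplete) hmaps hxmem (edist_ne_top _ _)
  -- xh solves the discrete equation
  have hsol : xh + Th h (G xh) = 0 := by
    have h1 : xh - e.symm (xh + Th h (G xh)) = xh := hfix
    have h2 : e.symm (xh + Th h (G xh)) = 0 := by
      have := sub_eq_self.mp h1
      exact this
    have := congrArg e h2
    rwa [e.apply_symm_apply, map_zero] at this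
  -- uniqueness
  have huniq : ∀ y ∈ closedBall x r, y + Th h (G y) = 0 → y = xh := by
    intro y hy hysol
    have hΦy : Φ y = y := by rw [hΦdef]; simp [hysol]
    have := hlip y hy xh hxhmem
    rw [hΦy, hfix] at this
    have h0 : ‖y - xh‖ ≤ 0 := by linarith
    have : y - xh = 0 := by
      have := le_antisymm h0 (norm_nonneg _)
      exact norm_eq_zero.mp this
    exact sub_eq_zero.mp this
  -- error estimate
  have herr : ‖x - xh‖ ≤ 2 * M1 * ‖(T - Th h) (G x)‖ := by
    have h1 : ‖x - xh‖ ≤ ‖x - Φ x‖ + ‖Φ x - Φ xh‖ := by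
      have : x - xh = (x - Φ x) + (Φ x - Φ xh) := by rw [hfix]; abel
      rw [this]; exact norm_add_le _ _
    have h2 : ‖Φ x - Φ xh‖ ≤ (1 / 2) * ‖x - xh‖ := hlip x hxmem xh hxhmem
    have h3 : ‖x - Φ x‖ ≤ M * ‖(T - Th h) (G x)‖ := by
      rw [norm_sub_rev]; exact hΦxnorm
    have h4 : ‖x - xh‖ ≤ 2 * M * ‖(T - Th h) (G x)‖ := by linarith
    have h5 : 2 * M * ‖(T - Th h) (G x)‖ ≤ 2 * M1 * ‖(T - Th h) (G x)‖ := by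
      apply mul_le_mul_of_nonneg_right _ (norm_nonneg _)
      linarith
    linarith
  -- invertibility of the discrete linearization at xh
  have hinv : ∃ eh : X ≃L[ℝ] X,
      (eh : X →L[ℝ] X) = ContinuousLinearMap.id ℝ X + (Th h).comp (G' xh) := by
    set A : X →L[ℝ] X := ContinuousLinearMap.id ℝ X + (Th h).comp (G' xh) with hAdef
    set B : X →L[ℝ] X := (e.symm : X →L[ℝ] X).comp (A - (e : X →L[ℝ] X)) with hBdef
    have hAe : A - (e : X →L[ℝ] X) =
        -((T - Th h).comp (G' xh) + T.comp (G' x - G' xh)) := by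
      rw [hAdef, he]
      ext v
      simp [ContinuousLinearMap.sub_apply, ContinuousLinearMap.add_apply,
        ContinuousLinearMap.comp_apply, map_sub, ContinuousLinearMap.neg_apply]
    have hG'xh : ‖G' xh‖ ≤ ‖G' x‖ + 1 := by
      have h1 : ‖G' xh‖ - ‖G' x‖ ≤ ‖G' xh - G' x‖ := norm_sub_norm_le _ _
      have h2 : ‖G' xh - G' x‖ ≤ δ := hG'near xh hxhmem
      linarith
    have hAenorm : ‖A - (e : X →L[ℝ] X)‖ ≤ (4 * M1)⁻¹ + (4 * M1)⁻¹ := by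
      rw [hAe, norm_neg]
      have h1 : ‖(T - Th h).comp (G' xh)‖ ≤ nt * (‖G' x‖ + 1) := by
        calc ‖(T - Th h).comp (G' xh)‖ ≤ nt * ‖G' xh‖ := ContinuousLinearMap.opNorm_comp_le _ _
          _ ≤ nt * (‖G' x‖ + 1) := mul_le_mul_of_nonneg_left hG'xh hnt0
      have h1' : nt * (‖G' x‖ + 1) ≤ (4 * M1)⁻¹ := by
        have hc : (0 : ℝ) < ‖G' x‖ + 1 := by positivity
        calc nt * (‖G' x‖ + 1) ≤ (4 * M1 * (‖G' x‖ + 1))⁻¹ * (‖G' x‖ + 1) := by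
              apply mul_le_mul_of_nonneg_right (le_trans hTh.le hη2) hc.le
          _ = (4 * M1)⁻¹ := by field_simp
      have h2 : ‖T.comp (G' x - G' xh)‖ ≤ (4 * M1)⁻¹ := by
        calc ‖T.comp (G' x - G' xh)‖ ≤ ‖T‖ * ‖G' x - G' xh‖ :=
              ContinuousLinearMap.opNorm_comp_le _ _
          _ ≤ (‖T‖ + 1) * δ := by
              apply mul_le_mul (by linarith [norm_nonneg T]) _ (norm_nonneg _) (by positivity)
              rw [norm_sub_rev]
              exact hG'near xh hxhmem
          _ = (4 * M1)⁻¹ := key2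
      calc ‖(T - Th h).comp (G' xh) + T.comp (G' x - G' xh)‖
          ≤ ‖(T - Th h).comp (G' xh)‖ + ‖T.comp (G' x - G' xh)‖ := norm_add_le _ _
        _ ≤ (4 * M1)⁻¹ + (4 * M1)⁻¹ := add_le_add (le_trans h1 h1') h2
    have hBnorm : ‖B‖ < 1 := by
      calc ‖B‖ ≤ M * ‖A - (e : X →L[ℝ] X)‖ := ContinuousLinearMap.opNorm_comp_le _ _
        _ ≤ M * ((4 * M1)⁻¹ + (4 * M1)⁻¹) := mul_le_mul_of_nonneg_left hAenorm hM0
        _ ≤ 1 / 2 := keyhalf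
        _ < 1 := by norm_num
    have hnegB : ‖-B‖ < 1 := by rwa [norm_neg]
    set u : (X →L[ℝ] X)ˣ := Units.oneSub (-B) hnegB with hudef
    have huval : (u : X →L[ℝ] X) = 1 + B := by
      rw [hudef, Units.val_oneSub, sub_neg_eq_add]
    refine ⟨(ContinuousLinearEquiv.ofUnit u).trans e, ?_⟩
    have hcoe : (((ContinuousLinearEquiv.ofUnit u).trans e : X ≃L[ℝ] X) : X →L[ℝ] X) =
        (e : X →L[ℝ] X).comp (u : X →L[ℝ] X) := by
      ext v
      rfl
    rw [hcoe, huval]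
    ext v
    have : B v = e.symm (A v - e v) := rfl
    simp [ContinuousLinearMap.comp_apply, ContinuousLinearMap.add_apply, this, map_sub,
      ContinuousLinearMap.one_apply, e.apply_symm_apply]
  exact ⟨xh, hxhmem, hsol, huniq, hinv, herr⟩
end

section
/- Let (Ω, μ) be a finite measure space, 1 < q < p < ∞, 1/r = 1/q - 1/p, and h ∈ C¹(ℝ) with |h'(x)| ≤ C(1 + |x|^{p/r}) for all x. Then the Nemytskii operator H : L^p(Ω,μ) → L^q(Ω,μ), H(u) = h∘u, is well defined and continuously Fréchet differentiable, with dH[u](v) = h'(u)·v. -/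
set_option maxHeartbeats 1000000
set_option synthInstance.maxHeartbeats 400000

open MeasureTheory Filter
open scoped ENNReal Topology

namespace NemAux

variable {Ω : Type*} [MeasurableSpace Ω] {μ : Measure Ω} [IsFiniteMeasure μ]

lemma div_div_self_eq {p s : ℝ≥0∞} (hp0 : p ≠ 0) (hpt : p ≠ ∞) (hs0 : s ≠ 0) (hst : s ≠ ∞) :
    p / (p / s) = s := by
  have hps0 : p / s ≠ 0 := by
    simp [ENNReal.div_eq_zero_iff, hp0, hst]
  have hpst : p / s ≠ ∞ := by
    simp [ENNReal.div_eq_top, hp0, hpt, hs0]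
  rw [eq_comm, ENNReal.eq_div_iff hps0 hpst]
  exact ENNReal.div_mul_cancel hs0 hst

omit [IsFiniteMeasure μ] in
lemma memLp_norm_rpow {u : Ω → ℝ} {p s : ℝ≥0∞} (hp0 : p ≠ 0) (hpt : p ≠ ∞) (hs0 : s ≠ 0)
    (hst : s ≠ ∞) (hu : MemLp u p μ) :
    MemLp (fun x => ‖u x‖ ^ (p.toReal / s.toReal)) s μ := by
  have h := hu.norm_rpow_div (p / s)
  rw [div_div_self_eq hp0 hpt hs0 hst, ENNReal.toReal_div] at h
  exact h

/-- Membership: a continuous `g` of two variables with growth of order `p/s` composed with two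
`L^p` functions belongs to `L^s`. -/
lemma memLp_comp_growth {p s : ℝ≥0∞} (hp0 : p ≠ 0) (hpt : p ≠ ∞) (hs0 : s ≠ 0) (hst : s ≠ ∞)
    (g : ℝ → ℝ → ℝ) (hg : Continuous fun z : ℝ × ℝ => g z.1 z.2) (C : ℝ)
    (hgb : ∀ a b, |g a b| ≤ C * (1 + |a| ^ (p.toReal / s.toReal) + |b| ^ (p.toReal / s.toReal)))
    {u v : Ω → ℝ} (hu : MemLp u p μ) (hv : MemLp v p μ) :
    MemLp (fun x => g (u x) (v x)) s μ := by
  set α := p.toReal / s.toReal with hα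
  have hw : MemLp (fun x => C * (1 + ‖u x‖ ^ α + ‖v x‖ ^ α)) s μ := by
    exact (((memLp_const (μ := μ) (p := s) (1:ℝ)).add (memLp_norm_rpow hp0 hpt hs0 hst hu)).add
      (memLp_norm_rpow hp0 hpt hs0 hst hv)).const_mul C
  have hmeas : AEStronglyMeasurable (fun x => g (u x) (v x)) μ := by
    exact hg.comp_aestronglyMeasurable (hu.1.prodMk hv.1)
  refine MemLp.of_le hw hmeas (Eventually.of_forall fun x => ?_)
  have h1 := hgb (u x) (v x)
  have h2 : C * (1 + |u x| ^ α + |v x| ^ α) ≤ ‖C * (1 + ‖u x‖ ^ α + ‖v x‖ ^ α)‖ := by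
    simp only [Real.norm_eq_abs]
    exact le_abs_self _
  calc ‖g (u x) (v x)‖ = |g (u x) (v x)| := rfl
    _ ≤ C * (1 + |u x| ^ α + |v x| ^ α) := h1
    _ ≤ _ := h2

end NemAux

namespace NemAux2
open NemAux
variable {Ω : Type*} [MeasurableSpace Ω] {μ : Measure Ω}

lemma unifIntegrable_comp_idx {f : ℕ → Ω → ℝ} {p : ℝ≥0∞}
    (hf : UnifIntegrable f p μ) (k : ℕ → ℕ) : UnifIntegrable (fun n => f (k n)) p μ :=
  fun _ hε => let ⟨δ, hδ, H⟩ := hf hε; ⟨δ, hδ, fun i => H (k i)⟩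

lemma unifIntegrable_of_dominated {f w : ℕ → Ω → ℝ} {p : ℝ≥0∞}
    (hw : UnifIntegrable w p μ)
    (hb : ∀ n, ∀ x, ‖f n x‖ ≤ ‖w n x‖) : UnifIntegrable f p μ := by
  intro ε hε
  obtain ⟨δ, hδ, H⟩ := hw hε
  refine ⟨δ, hδ, fun i s hs hμs => le_trans (eLpNorm_mono fun x => ?_) (H i s hs hμs)⟩
  by_cases hx : x ∈ s
  · simpa [Set.indicator_of_mem hx] using hb i x
  · simp [Set.indicator_of_notMem hx]

lemma unifIntegrable_const_mul {f : ℕ → Ω → ℝ} {p : ℝ≥0∞} (C : ℝ)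
    (hf : UnifIntegrable f p μ) : UnifIntegrable (fun n x => C * f n x) p μ := by
  intro ε hε
  rcases eq_or_ne C 0 with rfl | hC
  · exact ⟨1, one_pos, fun i s hs hμs => by simp [hε.le]⟩
  have hε' : 0 < ε / ‖C‖ := div_pos hε (norm_pos_iff.mpr hC)
  obtain ⟨δ, hδ, H⟩ := hf hε'
  refine ⟨δ, hδ, fun i s hs hμs => ?_⟩
  have : s.indicator (fun x => C * f i x) = C • (s.indicator (f i)) := by
    ext x
    by_cases hx : x ∈ s <;> simp [Set.indicator_of_mem, Set.indicator_of_notMem, hx]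
  rw [this, eLpNorm_const_smul]
  calc (‖C‖₊ : ℝ≥0∞) * eLpNorm (s.indicator (f i)) p μ
      ≤ ‖C‖₊ * ENNReal.ofReal (ε / ‖C‖) := by
        exact mul_le_mul_right (H i s hs hμs) _
    _ = ENNReal.ofReal ε := by
        rw [← ENNReal.ofReal_coe_nnreal, ← ENNReal.ofReal_mul (by positivity)]
        congr 1
        rw [coe_nnnorm, mul_div_cancel₀ _ (norm_ne_zero_iff.mpr hC)]

/-- transfer of uniform integrability through `x ↦ ‖x‖ ^ (p.toReal / s.toReal)`. -/
lemma unifIntegrable_norm_rpow {f : ℕ → Ω → ℝ} {p s : ℝ≥0∞} (hp0 : p ≠ 0) (hpt : p ≠ ∞)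
    (hs0 : s ≠ 0) (hst : s ≠ ∞) (hf : UnifIntegrable f p μ) :
    UnifIntegrable (fun n x => ‖f n x‖ ^ (p.toReal / s.toReal)) s μ := by
  set α := p.toReal / s.toReal with hα
  have hα0 : 0 < α :=
    div_pos (ENNReal.toReal_pos hp0 hpt) (ENNReal.toReal_pos hs0 hst)
  intro ε hε
  obtain ⟨δ, hδ, H⟩ := hf (Real.rpow_pos_of_pos hε (1 / α))
  refine ⟨δ, hδ, fun i t ht hμt => ?_⟩
  have hind : t.indicator (fun x => ‖f i x‖ ^ α) = fun x => ‖t.indicator (f i) x‖ ^ α := by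
    ext x
    by_cases hx : x ∈ t
    · simp [Set.indicator_of_mem hx]
    · simp [Set.indicator_of_notMem hx, Real.zero_rpow hα0.ne']
  have hkey : eLpNorm (fun x => ‖t.indicator (f i) x‖ ^ α) s μ
      = eLpNorm (t.indicator (f i)) p μ ^ α := by
    rw [eLpNorm_norm_rpow _ hα0]
    congr 2
    rw [hα, ← ENNReal.toReal_div, ENNReal.ofReal_toReal (by
      simp [ENNReal.div_eq_top, hp0, hpt, hs0]), ENNReal.mul_div_cancel hs0 hst]
  rw [hind, hkey]
  calc eLpNorm (t.indicator (f i)) p μ ^ α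
      ≤ ENNReal.ofReal (ε ^ (1 / α)) ^ α :=
        ENNReal.rpow_le_rpow (H i t ht hμt) hα0.le
    _ = ENNReal.ofReal ε := by
        have h1 : (ε ^ (1 / α)) ^ α = ε := by
          rw [← Real.rpow_mul hε.le, one_div, inv_mul_cancel₀ hα0.ne', Real.rpow_one]
        rw [ENNReal.ofReal_rpow_of_nonneg (Real.rpow_nonneg hε.le _) hα0.le, h1]

end NemAux2

namespace NemAux3
open NemAux NemAux2
variable {Ω : Type*} [MeasurableSpace Ω] {μ : Measure Ω} [IsFiniteMeasure μ]

/-- Sequential continuity of the two-variable Nemytskii operator `(u,v) ↦ g(u,v)`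
from `L^p × L^p` to `L^s`. -/
lemma nem_cont {p s : ℝ≥0∞} (hp1 : 1 ≤ p) (hpt : p ≠ ∞) (hs1 : 1 ≤ s) (hst : s ≠ ∞)
    (g : ℝ → ℝ → ℝ) (hg : Continuous fun z : ℝ × ℝ => g z.1 z.2) (C : ℝ)
    (hgb : ∀ a b, |g a b| ≤ C * (1 + |a| ^ (p.toReal / s.toReal) + |b| ^ (p.toReal / s.toReal)))
    {u v : ℕ → Ω → ℝ} {u₀ v₀ : Ω → ℝ}
    (hu : ∀ n, MemLp (u n) p μ) (hv : ∀ n, MemLp (v n) p μ)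
    (hu₀ : MemLp u₀ p μ) (hv₀ : MemLp v₀ p μ)
    (hucv : Tendsto (fun n => eLpNorm (u n - u₀) p μ) atTop (𝓝 0))
    (hvcv : Tendsto (fun n => eLpNorm (v n - v₀) p μ) atTop (𝓝 0)) :
    Tendsto (fun n => eLpNorm ((fun x => g (u n x) (v n x)) - fun x => g (u₀ x) (v₀ x)) s μ)
      atTop (𝓝 0) := by
  have hp0 : p ≠ 0 := (lt_of_lt_of_le zero_lt_one hp1).ne'
  have hs0 : s ≠ 0 := (lt_of_lt_of_le zero_lt_one hs1).ne'
  set α := p.toReal / s.toReal with hα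
  have hα0 : 0 < α := div_pos (ENNReal.toReal_pos hp0 hpt) (ENNReal.toReal_pos hs0 hst)
  have hmeas : ∀ n, AEStronglyMeasurable (fun x => g (u n x) (v n x)) μ := fun n =>
    hg.comp_aestronglyMeasurable ((hu n).1.prodMk (hv n).1)
  have hmem₀ : MemLp (fun x => g (u₀ x) (v₀ x)) s μ :=
    memLp_comp_growth hp0 hpt hs0 hst g hg C hgb hu₀ hv₀
  -- Uniform integrability of the image family
  have huui : UnifIntegrable u p μ := unifIntegrable_of_tendsto_Lp hp1 hpt hu hu₀ hucv
  have hvui : UnifIntegrable v p μ := unifIntegrable_of_tendsto_Lp hp1 hpt hv hv₀ hvcv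
  have hrmeas : ∀ (w : ℕ → Ω → ℝ), (∀ n, MemLp (w n) p μ) → ∀ n,
      AEStronglyMeasurable (fun x => ‖w n x‖ ^ α) μ := by
    intro w hw n
    have hc : Continuous fun t : ℝ => ‖t‖ ^ α :=
      continuous_norm.rpow_const fun _ => Or.inr hα0.le
    exact hc.comp_aestronglyMeasurable (hw n).1
  have h1ui : UnifIntegrable (fun (_ : ℕ) (_ : Ω) => (1 : ℝ)) s μ :=
    unifIntegrable_const hs1 hst (memLp_const 1)
  have huaui : UnifIntegrable (fun n x => ‖u n x‖ ^ α) s μ :=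
    unifIntegrable_norm_rpow hp0 hpt hs0 hst huui
  have hvaui : UnifIntegrable (fun n x => ‖v n x‖ ^ α) s μ :=
    unifIntegrable_norm_rpow hp0 hpt hs0 hst hvui
  have hwui : UnifIntegrable (fun n x => C * (1 + ‖u n x‖ ^ α + ‖v n x‖ ^ α)) s μ := by
    refine unifIntegrable_const_mul C ?_
    exact (h1ui.add huaui hs1 (fun _ => aestronglyMeasurable_const) (hrmeas u hu)).add hvaui hs1
      (fun n => aestronglyMeasurable_const.add (hrmeas u hu n)) (hrmeas v hv)
  have hfui : UnifIntegrable (fun n x => g (u n x) (v n x)) s μ := by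
    refine unifIntegrable_of_dominated hwui fun n x => ?_
    calc ‖g (u n x) (v n x)‖ = |g (u n x) (v n x)| := rfl
      _ ≤ C * (1 + |u n x| ^ α + |v n x| ^ α) := hgb _ _
      _ ≤ _ := le_abs_self _
  -- subsequence principle
  refine tendsto_of_subseq_tendsto fun ns hns => ?_
  have huim : TendstoInMeasure μ (fun n => u (ns n)) atTop u₀ :=
    tendstoInMeasure_of_tendsto_eLpNorm hp0 (fun n => (hu (ns n)).1) hu₀.1 (hucv.comp hns)
  obtain ⟨ms₁, hms₁mono, hms₁⟩ := huim.exists_seq_tendsto_ae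
  have hvim : TendstoInMeasure μ (fun n => v (ns (ms₁ n))) atTop v₀ :=
    tendstoInMeasure_of_tendsto_eLpNorm hp0 (fun n => (hv (ns (ms₁ n))).1) hv₀.1
      (hvcv.comp (hns.comp hms₁mono.tendsto_atTop))
  obtain ⟨ms₂, hms₂mono, hms₂⟩ := hvim.exists_seq_tendsto_ae
  set k : ℕ → ℕ := fun n => ns (ms₁ (ms₂ n)) with hk
  have hae : ∀ᵐ x ∂μ, Tendsto (fun n => g (u (k n) x) (v (k n) x)) atTop
      (𝓝 (g (u₀ x) (v₀ x))) := by
    filter_upwards [hms₁, hms₂] with x hux hvx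
    have hux' : Tendsto (fun n => u (k n) x) atTop (𝓝 (u₀ x)) :=
      hux.comp hms₂mono.tendsto_atTop
    have hpair : Tendsto (fun n => ((u (k n) x), (v (k n) x))) atTop (𝓝 (u₀ x, v₀ x)) :=
      hux'.prodMk_nhds hvx
    exact ((hg.tendsto _).comp hpair : _)
  exact ⟨fun n => ms₁ (ms₂ n),
    tendsto_Lp_finite_of_tendsto_ae hs1 hst (fun n => hmeas (k n)) hmem₀
      (unifIntegrable_comp_idx hfui k) hae⟩

end NemAux3

namespace NemAux4
open intervalIntegral

lemma rpow_add_le {x y α : ℝ} (hx : 0 ≤ x) (hy : 0 ≤ y) (hα : 0 ≤ α) :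
    (x + y) ^ α ≤ 2 ^ α * (x ^ α + y ^ α) := by
  have h1 : x + y ≤ 2 * max x y := by
    rcases le_total x y with h | h
    · calc x + y ≤ y + y := by linarith
        _ = 2 * y := by ring
        _ ≤ 2 * max x y := by rw [max_eq_right h]
    · calc x + y ≤ x + x := by linarith
        _ = 2 * x := by ring
        _ ≤ 2 * max x y := by rw [max_eq_left h]
  calc (x + y) ^ α ≤ (2 * max x y) ^ α :=
        Real.rpow_le_rpow (by positivity) h1 hα
    _ = 2 ^ α * (max x y) ^ α := Real.mul_rpow (by norm_num) (le_max_of_le_left hx)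
    _ ≤ 2 ^ α * (x ^ α + y ^ α) := by
        have : (max x y) ^ α ≤ x ^ α + y ^ α := by
          rcases le_total x y with h | h
          · rw [max_eq_right h]; exact le_add_of_nonneg_left (Real.rpow_nonneg hx α)
          · rw [max_eq_left h]; exact le_add_of_nonneg_right (Real.rpow_nonneg hy α)
        exact mul_le_mul_of_nonneg_left this (by positivity)

lemma abs_le_one_add_rpow {a β : ℝ} (hβ : 1 ≤ β) : |a| ≤ 1 + |a| ^ β := by
  rcases le_total (|a|) 1 with h | h
  · have : (0:ℝ) ≤ |a| ^ β := Real.rpow_nonneg (abs_nonneg a) β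
    linarith
  · have : |a| = |a| ^ (1:ℝ) := (Real.rpow_one _).symm
    calc |a| = |a| ^ (1:ℝ) := this
      _ ≤ |a| ^ β := Real.rpow_le_rpow_of_exponent_le h hβ
      _ ≤ 1 + |a| ^ β := by linarith

/-- Fundamental theorem of calculus identity for the remainder. -/
lemma ftc_id {h : ℝ → ℝ} (hh : ContDiff ℝ 1 h) (a b : ℝ) :
    h (a + b) - h a = (∫ t in (0:ℝ)..1, deriv h (a + t * b)) * b := by
  have hdc : Continuous (deriv h) := hh.continuous_deriv le_rfl
  have hd : ∀ t : ℝ, HasDerivAt (fun s : ℝ => h (a + s * b)) (deriv h (a + t * b) * b) t := by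
    intro t
    have h1 : HasDerivAt (fun s : ℝ => a + s * b) b t := by
      simpa using ((hasDerivAt_id t).mul_const b).const_add a
    exact (((hh.differentiable one_ne_zero) (a + t * b)).hasDerivAt).comp t h1
  have hint : IntervalIntegrable (fun t => deriv h (a + t * b) * b) MeasureTheory.volume 0 1 :=
    ((hdc.comp (by fun_prop)).mul continuous_const).intervalIntegrable 0 1
  have key := intervalIntegral.integral_eq_sub_of_hasDerivAt (f := fun s : ℝ => h (a + s * b))
    (f' := fun t => deriv h (a + t * b) * b) (fun t _ => hd t) hint
  rw [intervalIntegral.integral_mul_const] at key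
  simpa using key.symm

end NemAux4

open scoped Topology
open Asymptotics

/-- Continuous differentiability of the Nemytskii operator `u ↦ h ∘ u` from
`L^p(Ω,μ)` to `L^q(Ω,μ)` on a finite measure space, under the growth condition
`|h'(x)| ≤ C(1 + |x|^{p/r})` with `1/r = 1/q - 1/p`; its derivative is
`v ↦ h'(u)·v`. -/
theorem nemytskii_Lp_differentiable
    {Ω : Type*} [MeasurableSpace Ω] (μ : Measure Ω) [IsFiniteMeasure μ]
    (p q r : ℝ≥0∞) [Fact (1 ≤ p)] [Fact (1 ≤ q)]
    (hq : 1 < q) (hqp : q < p) (hp : p < ∞)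
    (hr : 1 / r = 1 / q - 1 / p)
    (h : ℝ → ℝ) (hh : ContDiff ℝ 1 h) (C : ℝ) (hC : 0 ≤ C)
    (hgrowth : ∀ x : ℝ, |deriv h x| ≤ C * (1 + |x| ^ (p.toReal / r.toReal))) :
    ∃ H : Lp ℝ p μ → Lp ℝ q μ,
      (∀ u : Lp ℝ p μ, (H u : Ω → ℝ) =ᵐ[μ] fun x => h (u x)) ∧
      ∃ DH : Lp ℝ p μ → (Lp ℝ p μ →L[ℝ] Lp ℝ q μ),
        Continuous DH ∧
        (∀ u, HasFDerivAt H (DH u) u) ∧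
        (∀ u v : Lp ℝ p μ, (DH u v : Ω → ℝ) =ᵐ[μ] fun x => deriv h (u x) * v x) := by
  -- exponent bookkeeping
  have hp1 : (1:ℝ≥0∞) ≤ p := Fact.out
  have hq1 : (1:ℝ≥0∞) ≤ q := Fact.out
  have hp0 : p ≠ 0 := (zero_lt_one.trans (hq.trans hqp)).ne'
  have hq0 : q ≠ 0 := (zero_lt_one.trans hq).ne'
  have hpt : p ≠ ∞ := hp.ne
  have hqt : q ≠ ∞ := (hqp.trans hp).ne
  have h1p_lt : 1 / p < 1 / q := by
    rw [one_div, one_div]; exact ENNReal.inv_lt_inv.mpr hqp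
  have h1p_le : 1 / p ≤ 1 / q := h1p_lt.le
  have hrinv0 : 1 / r ≠ 0 := by rw [hr]; exact (tsub_pos_of_lt h1p_lt).ne'
  have hrtop : r ≠ ∞ := by
    intro hcon; rw [hcon] at hrinv0; simp at hrinv0
  have hqinv_ne_top : 1 / q ≠ ∞ := by
    rw [one_div]; exact ENNReal.inv_ne_top.mpr hq0
  have hr1 : (1:ℝ≥0∞) ≤ r := by
    rw [← ENNReal.inv_le_one, ← one_div, hr]
    exact le_trans tsub_le_self (by rw [one_div]; exact ENNReal.inv_le_one.mpr hq1)
  have hr0 : r ≠ 0 := (zero_lt_one.trans_le hr1).ne'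
  have hpqr : 1 / q = 1 / r + 1 / p := by rw [hr, tsub_add_cancel_of_le h1p_le]
  have hpt0 : 0 < p.toReal := ENNReal.toReal_pos hp0 hpt
  have hqt0 : 0 < q.toReal := ENNReal.toReal_pos hq0 hqt
  have hrt0 : 0 < r.toReal := ENNReal.toReal_pos hr0 hrtop
  set α := p.toReal / r.toReal with hαdef
  have hα0 : 0 < α := by positivity
  have hrtinv : r.toReal⁻¹ = q.toReal⁻¹ - p.toReal⁻¹ := by
    have h2 := congrArg ENNReal.toReal hr
    rw [ENNReal.toReal_sub_of_le h1p_le hqinv_ne_top] at h2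
    simpa [one_div] using h2
  have hβ : p.toReal / q.toReal = α + 1 := by
    have h3 : α = p.toReal / q.toReal - 1 := by
      rw [hαdef, div_eq_mul_inv, hrtinv, mul_sub, mul_inv_cancel₀ hpt0.ne', div_eq_mul_inv]
    linarith [h3]
  have hβ1 : 1 ≤ p.toReal / q.toReal := by rw [hβ]; linarith
  have hdc : Continuous (deriv h) := hh.continuous_deriv le_rfl
  -- growth of h itself
  have hhb : ∀ a : ℝ, |h a| ≤ (|h 0| + 2 * C) * (1 + |a| ^ (p.toReal / q.toReal)) := by
    intro a
    have hmvt : |h a - h 0| ≤ (C * (1 + |a| ^ α)) * |a| := by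
      have hbd : ∀ y ∈ Set.uIcc (0:ℝ) a, ‖deriv h y‖ ≤ C * (1 + |a| ^ α) := by
        intro y hy
        have hya : |y| ≤ |a| := by
          rcases Set.mem_uIcc.mp hy with ⟨hy0, hya⟩ | ⟨hay, hy0⟩
          · rw [abs_of_nonneg hy0]; exact hya.trans (le_abs_self a)
          · rw [abs_of_nonpos hy0]
            calc -y ≤ -a := neg_le_neg hay
              _ ≤ |a| := neg_le_abs a
        have hpow := Real.rpow_le_rpow (abs_nonneg y) hya hα0.le
        calc ‖deriv h y‖ = |deriv h y| := rfl
          _ ≤ C * (1 + |y| ^ α) := hgrowth y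
          _ ≤ C * (1 + |a| ^ α) := by nlinarith
      have hmv := Convex.norm_image_sub_le_of_norm_hasDerivWithin_le
        (f := h) (f' := deriv h) (s := Set.uIcc (0:ℝ) a)
        (fun y _ => ((hh.differentiable one_ne_zero y).hasDerivAt).hasDerivWithinAt) hbd
        (convex_uIcc 0 a) Set.left_mem_uIcc Set.right_mem_uIcc
      simpa [Real.norm_eq_abs] using hmv
    rcases eq_or_ne a 0 with rfl | ha
    · have : |(0:ℝ)| ^ (p.toReal / q.toReal) = 0 := by
        rw [abs_zero, Real.zero_rpow (by positivity)]
      rw [this]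
      nlinarith [abs_nonneg (h 0)]
    · have hxy : |a| ^ (α + 1) = |a| ^ α * |a| := Real.rpow_add_one (abs_ne_zero.mpr ha) α
      have hkey : |a| ≤ 1 + |a| ^ (p.toReal / q.toReal) := NemAux4.abs_le_one_add_rpow hβ1
      rw [hβ] at hkey ⊢
      have htri : |h a| ≤ |h a - h 0| + |h 0| := by
        calc |h a| = |(h a - h 0) + h 0| := by ring_nf
          _ ≤ |h a - h 0| + |h 0| := abs_add_le _ _
      have hx0 : (0:ℝ) ≤ |a| ^ α := Real.rpow_nonneg (abs_nonneg a) α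
      have ht0 : (0:ℝ) ≤ |a| := abs_nonneg a
      rw [hxy] at hkey ⊢
      nlinarith [abs_nonneg (h 0), mul_nonneg hx0 ht0, mul_nonneg hC (mul_nonneg hx0 ht0)]
  -- the averaged-derivative kernel and its properties
  set gI : ℝ → ℝ → ℝ := fun a b => ∫ t in (0:ℝ)..1, deriv h (a + t * b) with hgIdef
  have hgIcont : Continuous fun z : ℝ × ℝ => gI z.1 z.2 := by
    exact intervalIntegral.continuous_parametric_intervalIntegral_of_continuous'
      (f := fun (z : ℝ × ℝ) (t : ℝ) => deriv h (z.1 + t * z.2))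
      (hdc.comp ((continuous_fst.comp continuous_fst).add
        (continuous_snd.mul (continuous_snd.comp continuous_fst)))) 0 1
  have hgIb : ∀ a b : ℝ, |gI a b| ≤ (C * (1 + 2 ^ α)) * (1 + |a| ^ α + |b| ^ α) := by
    intro a b
    have h1 : ∀ t ∈ Set.uIoc (0:ℝ) 1, ‖deriv h (a + t * b)‖ ≤ C * (1 + (|a| + |b|) ^ α) := by
      intro t ht
      have ht' : 0 < t ∧ t ≤ 1 := by
        rwa [Set.uIoc_of_le (by norm_num : (0:ℝ) ≤ 1), Set.mem_Ioc] at ht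
      have habs : |a + t * b| ≤ |a| + |b| := by
        calc |a + t * b| ≤ |a| + |t * b| := abs_add_le _ _
          _ = |a| + t * |b| := by rw [abs_mul, abs_of_pos ht'.1]
          _ ≤ |a| + |b| := by nlinarith [abs_nonneg b, ht'.2]
      have hpow := Real.rpow_le_rpow (abs_nonneg _) habs hα0.le
      calc ‖deriv h (a + t * b)‖ = |deriv h (a + t * b)| := rfl
        _ ≤ C * (1 + |a + t * b| ^ α) := hgrowth _
        _ ≤ C * (1 + (|a| + |b|) ^ α) := by nlinarith
    have h2 := intervalIntegral.norm_integral_le_of_norm_le_const h1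
    rw [show |(1:ℝ) - 0| = 1 by norm_num, mul_one] at h2
    have h3 : (|a| + |b|) ^ α ≤ 2 ^ α * (|a| ^ α + |b| ^ α) :=
      NemAux4.rpow_add_le (abs_nonneg a) (abs_nonneg b) hα0.le
    have h2α : (1:ℝ) ≤ 2 ^ α := Real.one_le_rpow (by norm_num) hα0.le
    have hxa : (0:ℝ) ≤ |a| ^ α := Real.rpow_nonneg (abs_nonneg a) α
    have hxb : (0:ℝ) ≤ |b| ^ α := Real.rpow_nonneg (abs_nonneg b) α
    have hs0 : (0:ℝ) ≤ (|a| + |b|) ^ α := Real.rpow_nonneg (by positivity) α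
    have h4 : ‖gI a b‖ ≤ C * (1 + (|a| + |b|) ^ α) := h2
    calc |gI a b| = ‖gI a b‖ := rfl
      _ ≤ C * (1 + (|a| + |b|) ^ α) := h4
      _ ≤ (C * (1 + 2 ^ α)) * (1 + |a| ^ α + |b| ^ α) := by
          nlinarith [mul_le_mul_of_nonneg_left h3 hC, mul_nonneg hC (add_nonneg hxa hxb),
            mul_nonneg hC hxa, mul_nonneg hC hxb]
  set g₃ : ℝ → ℝ → ℝ := fun a b => gI a b - deriv h a with hg₃def
  have hg₃cont : Continuous fun z : ℝ × ℝ => g₃ z.1 z.2 :=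
    hgIcont.sub (hdc.comp continuous_fst)
  set D₃ : ℝ := C * (1 + 2 ^ α) + C with hD₃def
  have hg₃b : ∀ a b : ℝ, |g₃ a b| ≤ D₃ * (1 + |a| ^ α + |b| ^ α) := by
    intro a b
    have h1 := hgIb a b
    have h2 := hgrowth a
    have hxa : (0:ℝ) ≤ |a| ^ α := Real.rpow_nonneg (abs_nonneg a) α
    have hxb : (0:ℝ) ≤ |b| ^ α := Real.rpow_nonneg (abs_nonneg b) α
    calc |g₃ a b| ≤ |gI a b| + |deriv h a| := abs_sub _ _
      _ ≤ D₃ * (1 + |a| ^ α + |b| ^ α) := by nlinarith [mul_nonneg hC hxb]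
  -- the operator H
  have hHmem : ∀ u : Lp ℝ p μ, MemLp (fun x => h (u x)) q μ := by
    intro u
    refine NemAux.memLp_comp_growth hp0 hpt hq0 hqt (fun a _ => h a)
      (hh.continuous.comp continuous_fst) (|h 0| + 2 * C) (fun a b => ?_)
      (Lp.memLp u) (Lp.memLp u)
    have h1 := hhb a
    have hb0 : (0:ℝ) ≤ |b| ^ (p.toReal / q.toReal) := Real.rpow_nonneg (abs_nonneg b) _
    nlinarith [abs_nonneg (h 0), mul_nonneg (by positivity : (0:ℝ) ≤ |h 0| + 2 * C) hb0]
  set H : Lp ℝ p μ → Lp ℝ q μ := fun u => (hHmem u).toLp _ with hHdef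
  have hHcoe : ∀ u : Lp ℝ p μ, (H u : Ω → ℝ) =ᵐ[μ] fun x => h (u x) := fun u =>
    (hHmem u).coeFn_toLp
  -- the candidate derivative
  have hWmem : ∀ u : Lp ℝ p μ, MemLp (fun x => deriv h (u x)) r μ := by
    intro u
    refine NemAux.memLp_comp_growth hp0 hpt hr0 hrtop (fun a _ => deriv h a)
      (hdc.comp continuous_fst) C (fun a b => ?_) (Lp.memLp u) (Lp.memLp u)
    have h1 := hgrowth a
    nlinarith [mul_nonneg hC (Real.rpow_nonneg (abs_nonneg b) (p.toReal / r.toReal))]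
  have hDmem : ∀ u v : Lp ℝ p μ, MemLp ((fun x => deriv h (u x)) • (v : Ω → ℝ)) q μ :=
    fun u v => (Lp.memLp v).smul (hWmem u) (hpqr := ⟨by simpa only [one_div] using hpqr.symm⟩)
  set DHf : Lp ℝ p μ → Lp ℝ p μ → Lp ℝ q μ := fun u v => (hDmem u v).toLp _ with hDHfdef
  have hDHfcoe : ∀ u v, (DHf u v : Ω → ℝ) =ᵐ[μ] fun x => deriv h (u x) * v x := fun u v =>
    (hDmem u v).coeFn_toLp
  have hHolder : ∀ (w : Ω → ℝ), AEStronglyMeasurable w μ → ∀ v : Lp ℝ p μ,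
      eLpNorm (w • (v : Ω → ℝ)) q μ ≤ eLpNorm w r μ * eLpNorm (v : Ω → ℝ) p μ := fun w hw v =>
    eLpNorm_smul_le_mul_eLpNorm (Lp.aestronglyMeasurable v) hw (hpqr := ⟨by simpa only [one_div] using hpqr.symm⟩)
  have hDHadd : ∀ u v₁ v₂, DHf u (v₁ + v₂) = DHf u v₁ + DHf u v₂ := by
    intro u v₁ v₂
    apply Lp.ext
    filter_upwards [hDHfcoe u (v₁ + v₂), hDHfcoe u v₁, hDHfcoe u v₂, Lp.coeFn_add v₁ v₂,
      Lp.coeFn_add (DHf u v₁) (DHf u v₂)] with x h1 h2 h3 h4 h5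
    rw [h1, h5, Pi.add_apply, h2, h3, h4, Pi.add_apply]
    ring
  have hDHsmul : ∀ u (c : ℝ) v, DHf u (c • v) = c • DHf u v := by
    intro u c v
    apply Lp.ext
    filter_upwards [hDHfcoe u (c • v), hDHfcoe u v, Lp.coeFn_smul c v,
      Lp.coeFn_smul c (DHf u v)] with x h1 h2 h3 h4
    rw [h1, h4, Pi.smul_apply, h2, h3, Pi.smul_apply, smul_eq_mul, smul_eq_mul]
    ring
  set DH : Lp ℝ p μ → (Lp ℝ p μ →L[ℝ] Lp ℝ q μ) := fun u =>
    LinearMap.mkContinuous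
      { toFun := DHf u, map_add' := hDHadd u, map_smul' := hDHsmul u }
      (eLpNorm (fun x => deriv h (u x)) r μ).toReal
      (fun v => by
        rw [Lp.norm_def, Lp.norm_def, ← ENNReal.toReal_mul]
        refine ENNReal.toReal_mono (ENNReal.mul_ne_top (hWmem u).2.ne (Lp.eLpNorm_ne_top v)) ?_
        calc eLpNorm (DHf u v : Ω → ℝ) q μ
            = eLpNorm ((fun x => deriv h (u x)) • (v : Ω → ℝ)) q μ :=
              eLpNorm_congr_ae (hDHfcoe u v)
          _ ≤ _ := hHolder _ (hWmem u).1 v) with hDHdef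
  have hDHdist : ∀ u₁ u₂ : Lp ℝ p μ, ‖DH u₁ - DH u₂‖ ≤
      (eLpNorm ((fun x => deriv h (u₁ x)) - fun x => deriv h (u₂ x)) r μ).toReal := by
    intro u₁ u₂
    refine ContinuousLinearMap.opNorm_le_bound _ ENNReal.toReal_nonneg fun v => ?_
    have hcoe : (((DH u₁ - DH u₂) v : Lp ℝ q μ) : Ω → ℝ) =ᵐ[μ]
        ((fun x => deriv h (u₁ x)) - fun x => deriv h (u₂ x)) • (v : Ω → ℝ) := by
      have h1 : (DH u₁ - DH u₂) v = DHf u₁ v - DHf u₂ v := rfl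
      rw [h1]
      filter_upwards [Lp.coeFn_sub (DHf u₁ v) (DHf u₂ v), hDHfcoe u₁ v, hDHfcoe u₂ v]
        with x ha hb hc
      rw [ha, Pi.sub_apply, hb, hc]
      simp only [Pi.smul_apply', Pi.smul_apply, Pi.sub_apply, smul_eq_mul]
      ring
    rw [Lp.norm_def, eLpNorm_congr_ae hcoe, Lp.norm_def, ← ENNReal.toReal_mul]
    refine ENNReal.toReal_mono ?_ (hHolder _ ((hWmem u₁).sub (hWmem u₂)).1 v)
    exact ENNReal.mul_ne_top ((hWmem u₁).sub (hWmem u₂)).2.ne (Lp.eLpNorm_ne_top v)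
  refine ⟨H, hHcoe, DH, ?_, ?_, fun u v => hDHfcoe u v⟩
  · -- continuity of DH
    rw [continuous_iff_seqContinuous]
    intro un u hun
    rw [tendsto_iff_dist_tendsto_zero]
    have h2 : Tendsto (fun n => ‖un n - u‖) atTop (𝓝 0) :=
      tendsto_iff_norm_sub_tendsto_zero.mp hun
    have hseq : Tendsto (fun n => eLpNorm (((un n : Ω → ℝ)) - (u : Ω → ℝ)) p μ)
        atTop (𝓝 0) := by
      have h1 : ∀ n, eLpNorm (((un n : Ω → ℝ)) - (u : Ω → ℝ)) p μ
          = ENNReal.ofReal ‖un n - u‖ := by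
        intro n
        rw [← eLpNorm_congr_ae (Lp.coeFn_sub (un n) u), Lp.norm_def,
          ENNReal.ofReal_toReal (Lp.eLpNorm_ne_top _)]
      simp_rw [h1]
      simpa using ENNReal.tendsto_ofReal h2
    have hmain := NemAux3.nem_cont (μ := μ) hp1 hpt hr1 hrtop (fun a _ => deriv h a)
      (hdc.comp continuous_fst) C
      (fun a b => by
        have h1 := hgrowth a
        nlinarith [mul_nonneg hC (Real.rpow_nonneg (abs_nonneg b) (p.toReal / r.toReal))])
      (fun n => Lp.memLp (un n)) (fun n => Lp.memLp (un n)) (Lp.memLp u) (Lp.memLp u)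
      hseq hseq
    have hphi : Tendsto (fun n =>
        (eLpNorm ((fun x => deriv h ((un n) x)) - fun x => deriv h (u x)) r μ).toReal)
        atTop (𝓝 0) := by
      have := (ENNReal.tendsto_toReal (by simp : (0:ℝ≥0∞) ≠ ∞)).comp hmain
      exact this
    refine squeeze_zero (fun n => dist_nonneg) (fun n => ?_) hphi
    rw [dist_eq_norm]
    exact hDHdist (un n) u
  · -- differentiability
    intro u
    rw [hasFDerivAt_iff_isLittleO_nhds_zero]
    have hg3mem : ∀ v : Lp ℝ p μ,
        MemLp (fun x => g₃ ((u : Ω → ℝ) x) ((v : Ω → ℝ) x)) r μ := fun v =>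
      NemAux.memLp_comp_growth hp0 hpt hr0 hrtop g₃ hg₃cont D₃ hg₃b (Lp.memLp u) (Lp.memLp v)
    have hbound : ∀ v : Lp ℝ p μ, ‖H (u + v) - H u - DH u v‖ ≤
        (eLpNorm (fun x => g₃ ((u : Ω → ℝ) x) ((v : Ω → ℝ) x)) r μ).toReal * ‖v‖ := by
      intro v
      have hcoe : ((H (u + v) - H u - DH u v : Lp ℝ q μ) : Ω → ℝ) =ᵐ[μ]
          (fun x => g₃ ((u : Ω → ℝ) x) ((v : Ω → ℝ) x)) • (v : Ω → ℝ) := by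
        have h0 : DH u v = DHf u v := rfl
        rw [h0]
        filter_upwards [Lp.coeFn_sub (H (u + v) - H u) (DHf u v),
          Lp.coeFn_sub (H (u + v)) (H u), hHcoe (u + v), hHcoe u, hDHfcoe u v,
          Lp.coeFn_add u v] with x h1 h2 h3 h4 h5 h6
        rw [h1, Pi.sub_apply, h2, Pi.sub_apply, h3, h4, h5]
        simp only [Pi.smul_apply', Pi.smul_apply, smul_eq_mul]
        have h7 : ((u + v : Lp ℝ p μ) : Ω → ℝ) x = u x + v x := h6
        rw [h7]
        have hftc := NemAux4.ftc_id hh ((u : Ω → ℝ) x) ((v : Ω → ℝ) x)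
        simp only [hg₃def, hgIdef]
        linear_combination hftc
      calc ‖H (u + v) - H u - DH u v‖
          = (eLpNorm ((fun x => g₃ ((u : Ω → ℝ) x) ((v : Ω → ℝ) x)) • (v : Ω → ℝ)) q μ).toReal := by
            rw [Lp.norm_def, eLpNorm_congr_ae hcoe]
        _ ≤ _ := by
            rw [Lp.norm_def, ← ENNReal.toReal_mul]
            exact ENNReal.toReal_mono
              (ENNReal.mul_ne_top (hg3mem v).2.ne (Lp.eLpNorm_ne_top v))
              (hHolder _ (hg3mem v).1 v)
    have hPhi0 : Tendsto (fun v : Lp ℝ p μ =>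
        (eLpNorm (fun x => g₃ ((u : Ω → ℝ) x) ((v : Ω → ℝ) x)) r μ).toReal) (𝓝 0) (𝓝 0) := by
      have hPsi : Tendsto (fun v : Lp ℝ p μ =>
          eLpNorm (fun x => g₃ ((u : Ω → ℝ) x) ((v : Ω → ℝ) x)) r μ) (𝓝 0) (𝓝 0) := by
        rw [tendsto_iff_seq_tendsto]
        intro vn hvn
        have h2 : Tendsto (fun n => ‖vn n‖) atTop (𝓝 0) := by
          have := tendsto_iff_norm_sub_tendsto_zero.mp hvn
          simpa using this
        have hseq : Tendsto (fun n => eLpNorm (((vn n : Ω → ℝ)) - (0 : Ω → ℝ)) p μ)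
            atTop (𝓝 0) := by
          have h1 : ∀ n, eLpNorm (((vn n : Ω → ℝ)) - (0 : Ω → ℝ)) p μ
              = ENNReal.ofReal ‖vn n‖ := by
            intro n
            rw [sub_zero, Lp.norm_def, ENNReal.ofReal_toReal (Lp.eLpNorm_ne_top _)]
          simp_rw [h1]
          simpa using ENNReal.tendsto_ofReal h2
        have huconst : Tendsto (fun _ : ℕ => eLpNorm (((u : Ω → ℝ)) - (u : Ω → ℝ)) p μ)
            atTop (𝓝 0) := by
          simp [sub_self]
        have hmain := NemAux3.nem_cont (μ := μ) hp1 hpt hr1 hrtop g₃ hg₃cont D₃ hg₃b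
          (fun _ => Lp.memLp u) (fun n => Lp.memLp (vn n)) (Lp.memLp u) MemLp.zero
          huconst hseq
        have hzero : (fun x : Ω => g₃ ((u : Ω → ℝ) x) ((0 : Ω → ℝ) x)) = fun _ : Ω => (0:ℝ) := by
          funext x
          simp [hg₃def, hgIdef]
        refine hmain.congr fun n => ?_
        congr 1
        rw [hzero]
        funext x
        simp
      have := (ENNReal.tendsto_toReal (by simp : (0:ℝ≥0∞) ≠ ∞)).comp hPsi
      exact this
    rw [isLittleO_iff]
    intro c hc
    filter_upwards [hPhi0.eventually_lt_const hc] with v hv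
    calc ‖H (u + v) - H u - DH u v‖
        ≤ (eLpNorm (fun x => g₃ ((u : Ω → ℝ) x) ((v : Ω → ℝ) x)) r μ).toReal * ‖v‖ := hbound v
      _ ≤ c * ‖v‖ := mul_le_mul_of_nonneg_right hv.le (norm_nonneg v)
end
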